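/- Let w_{t+1} = w_t + η·(g_r + g_c)/2 be the averaged-gradient update. If 0 < η ≤ 1/L and cos θ ≥ 0 (i.e. 0° ≤ θ ≤ 90°), then the performance improvement is lower bounded: f(w_{t+1}) − f(w_t) ≥ η·(3‖g_r‖² + 6 cos θ ‖g_r‖‖g_c‖ + 3‖g_c‖²)/8. -/

import Mathlib

/-!
The averaged update is a gradient step of size `η / 2` from `w_t`, since `∇f(w_t) = g_r + g_c`.
For an `L`-smooth `f` the descent lemma bounds the gain of a step of size `s` below by
`s (1 - L s / 2) ‖∇f‖²`, which for `s = η / 2 ≤ 1 / (2L)` is at least `3η/8 ‖g_r + g_c‖²`;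
expanding `‖g_r + g_c‖²` with the law of cosines gives the bound.
-/

open RealInnerProductSpace InnerProductGeometry

section DescentLemma

variable {E : Type*} [NormedAddCommGroup E] [InnerProductSpace ℝ E] [CompleteSpace E]

theorem HasGradientAt.hasDerivAt_comp_add_smul {f : E → ℝ} {g x v : E} {t : ℝ}
    (hf : HasGradientAt f g (x + t • v)) :
    HasDerivAt (fun s : ℝ => f (x + s • v)) ⟪g, v⟫ t := by
  have hline : HasDerivAt (fun s : ℝ => x + s • v) v t := by
    simpa using ((hasDerivAt_id t).smul_const v).const_add x
  exact hf.hasFDerivAt.comp_hasDerivAt t hline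

theorem inner_gradient_sub_le_image_add_sub {f : E → ℝ} {L : ℝ} (hf : Differentiable ℝ f)
    (hlip : ∀ x y : E, ‖gradient f x - gradient f y‖ ≤ L * ‖x - y‖) (x v : E) :
    ⟪gradient f x, v⟫ - L / 2 * ‖v‖ ^ 2 ≤ f (x + v) - f x := by
  -- `φ` is nondecreasing on `[0, ∞)`: its derivative is `⟪∇f(x + t v) - ∇f x, v⟫ + L t ‖v‖² ≥ 0`.
  set φ : ℝ → ℝ := fun t => f (x + t • v) - t * ⟪gradient f x, v⟫ + L / 2 * t ^ 2 * ‖v‖ ^ 2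
  have hφ' : ∀ t, HasDerivAt φ
      (⟪gradient f (x + t • v), v⟫ - ⟪gradient f x, v⟫ + L * t * ‖v‖ ^ 2) t := by
    intro t
    have hline := (hf (x + t • v)).hasGradientAt.hasDerivAt_comp_add_smul
    have hlinear := (hasDerivAt_id t).mul_const ⟪gradient f x, v⟫
    have hquad := ((hasDerivAt_pow 2 t).const_mul (L / 2)).mul_const (‖v‖ ^ 2)
    exact ((hline.sub hlinear).add hquad).congr_deriv (by ring)
  have hφ'_nonneg : ∀ t : ℝ, 0 ≤ t →
      0 ≤ ⟪gradient f (x + t • v), v⟫ - ⟪gradient f x, v⟫ + L * t * ‖v‖ ^ 2 := by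
    intro t ht
    have hdiff : ‖gradient f (x + t • v) - gradient f x‖ ≤ L * t * ‖v‖ := by
      simpa [norm_smul, abs_of_nonneg ht, mul_assoc] using hlip (x + t • v) x
    have hcs := real_inner_le_norm (gradient f x - gradient f (x + t • v)) v
    rw [inner_sub_left, norm_sub_rev] at hcs
    nlinarith [mul_le_mul_of_nonneg_right hdiff (norm_nonneg v)]
  have hmono : MonotoneOn φ (Set.Ici 0) :=
    monotoneOn_of_hasDerivWithinAt_nonneg (convex_Ici 0)
      (fun t _ => (hφ' t).continuousAt.continuousWithinAt)
      (fun t _ => (hφ' t).hasDerivWithinAt)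
      (fun t ht => hφ'_nonneg t (interior_subset ht))
  have h01 : φ 0 ≤ φ 1 := hmono Set.self_mem_Ici (Set.mem_Ici.2 zero_le_one) zero_le_one
  simp only [φ, zero_smul, one_smul, add_zero, zero_mul, sub_zero, one_pow, mul_one,
    zero_pow two_ne_zero, mul_zero] at h01
  linarith

theorem mul_one_sub_mul_norm_gradient_sq_le_image_gradient_step_sub {f : E → ℝ} {L : ℝ}
    (hf : Differentiable ℝ f)
    (hlip : ∀ x y : E, ‖gradient f x - gradient f y‖ ≤ L * ‖x - y‖) (x : E) (s : ℝ) :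
    s * (1 - L * s / 2) * ‖gradient f x‖ ^ 2 ≤ f (x + s • gradient f x) - f x := by
  have h := inner_gradient_sub_le_image_add_sub hf hlip x (s • gradient f x)
  rw [real_inner_smul_right, real_inner_self_eq_norm_sq, norm_smul, mul_pow,
    Real.norm_eq_abs, sq_abs] at h
  linarith

end DescentLemma

theorem pcrpo_averaged_update_lower_bound_general
    {E : Type*} [NormedAddCommGroup E] [InnerProductSpace ℝ E] [CompleteSpace E]
    (f : E → ℝ) (L : ℝ)
    (hf : Differentiable ℝ f)
    (hlip : ∀ x y : E, ‖gradient f x - gradient f y‖ ≤ L * ‖x - y‖)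
    (gr gc : E)
    (cosθ : ℝ) (hcos : cosθ = ⟪gr, gc⟫ / (‖gr‖ * ‖gc‖))
    (wt : E) (hw : gradient f wt = gr + gc)
    (η : ℝ) (hη0 : 0 < η) (hηL : η ≤ 1 / L)
    (wt1 : E) (hupdate : wt1 = wt + (η / 2) • (gr + gc)) :
    f wt1 - f wt ≥
      η * (3 * ‖gr‖ ^ 2 + 6 * cosθ * ‖gr‖ * ‖gc‖ + 3 * ‖gc‖ ^ 2) / 8 := by
  have hstep := mul_one_sub_mul_norm_gradient_sq_le_image_gradient_step_sub hf hlip wt (η / 2)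
  rw [hw, ← hupdate] at hstep
  have hLη : L * η ≤ 1 := by
    have hL : 0 < L := one_div_pos.mp (hη0.trans_le hηL)
    rwa [le_div_iff₀ hL, mul_comm] at hηL
  have hcosine : ‖gr + gc‖ ^ 2 = ‖gr‖ ^ 2 + 2 * (cosθ * ‖gr‖ * ‖gc‖) + ‖gc‖ ^ 2 := by
    rw [hcos, ← cos_angle, mul_assoc, cos_angle_mul_norm_mul_norm, norm_add_sq_real]
  have hgain : 3 * η / 8 * ‖gr + gc‖ ^ 2 ≤ f wt1 - f wt := by
    refine le_trans ?_ hstep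
    nlinarith [mul_nonneg (mul_nonneg hη0.le (sub_nonneg.2 hLη)) (sq_nonneg ‖gr + gc‖)]
  rw [hcosine] at hgain
  linarith

/-- Lower bound on performance improvement of the averaged-gradient
update when the gradients do not conflict (`cos θ ≥ 0`, i.e. `0° ≤ θ ≤ 90°`). -/
theorem pcrpo_averaged_update_lower_bound
    {E : Type*} [NormedAddCommGroup E] [InnerProductSpace ℝ E] [CompleteSpace E]
    (f : E → ℝ) (L : ℝ) (hL : 0 < L)
    (hf : Differentiable ℝ f)
    (hlip : ∀ x y : E, ‖gradient f x - gradient f y‖ ≤ L * ‖x - y‖)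
    (gr gc : E) (hgr : gr ≠ 0) (hgc : gc ≠ 0)
    (cosθ : ℝ) (hcos : cosθ = ⟪gr, gc⟫ / (‖gr‖ * ‖gc‖))
    (hnonconflict : 0 ≤ cosθ)
    (wt : E) (hw : gradient f wt = gr + gc)
    (η : ℝ) (hη0 : 0 < η) (hηL : η ≤ 1 / L)
    (wt1 : E) (hupdate : wt1 = wt + (η / 2) • (gr + gc)) :
    f wt1 - f wt ≥
      η * (3 * ‖gr‖ ^ 2 + 6 * cosθ * ‖gr‖ * ‖gc‖ + 3 * ‖gc‖ ^ 2) / 8 :=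
  pcrpo_averaged_update_lower_bound_general f L hf hlip gr gc cosθ hcos wt hw η hη0 hηL wt1 hupdate
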